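/- There is no finite set B of 4×4 complex rate matrices (elements of 𝔏_GM) with |B| = 7 or |B| = 11 such that B is linearly independent over ℂ and B is invariant as a set under the conjugation action of 𝒢, i.e. {K_σ Q K_σ⁻¹ : Q ∈ B} = B for every σ ∈ 𝒢. In particular, there are no Lie Markov models with purine/pyrimidine symmetry of dimension seven or eleven. -/

import Mathlib

open Matrix

noncomputable section

/-- The elementary rate matrix `L_ij`: entry 1 at `(i,j)`, entry −1 at `(j,j)`, 0 elsewhere. -/
def Lmat (i j : Fin 4) : Matrix (Fin 4) (Fin 4) ℂ :=
  Matrix.single i j 1 - Matrix.single j j 1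

/-- `𝔏_GM`: the 4×4 complex matrices each of whose columns sums to zero. -/
def LGMset : Set (Matrix (Fin 4) (Fin 4) ℂ) :=
  {Q | ∀ j, ∑ i, Q i j = 0}

/-- The permutation matrix `K_σ`, with entry 1 in position `(σ j, j)` for each `j`. -/
def Kmat (σ : Equiv.Perm (Fin 4)) : Matrix (Fin 4) (Fin 4) ℂ :=
  Matrix.of fun i j => if i = σ j then 1 else 0

/-- The permutation vector `P_σ := K_σ − I`. -/
def Pmat (σ : Equiv.Perm (Fin 4)) : Matrix (Fin 4) (Fin 4) ℂ :=
  Kmat σ - 1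

/-- The 4-cycle (1324) (on `{1,2,3,4}`, i.e. `0 ↦ 2 ↦ 1 ↦ 3 ↦ 0` on `Fin 4`). -/
def c1324 : Equiv.Perm (Fin 4) := Equiv.swap 0 3 * Equiv.swap 0 1 * Equiv.swap 0 2

/-- The 4-cycle (1423) (on `{1,2,3,4}`, i.e. `0 ↦ 3 ↦ 1 ↦ 2 ↦ 0` on `Fin 4`). -/
def c1423 : Equiv.Perm (Fin 4) := Equiv.swap 0 2 * Equiv.swap 0 1 * Equiv.swap 0 3

/-- The group 𝒢 = {e, (12), (34), (12)(34), (13)(24), (14)(23), (1324), (1423)},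
presented as a list of its eight elements. -/
def Glist : List (Equiv.Perm (Fin 4)) :=
  [1, Equiv.swap 0 1, Equiv.swap 2 3, Equiv.swap 0 1 * Equiv.swap 2 3,
   Equiv.swap 0 2 * Equiv.swap 1 3, Equiv.swap 0 3 * Equiv.swap 1 2, c1324, c1423]

/-!
Under 𝒢 the set `B` splits into orbits whose sizes divide `|𝒢| = 8`. The orbit sums of a linearly
independent set are again linearly independent, and each is a 𝒢-invariant rate matrix. Such a
matrix is determined by its entries `(0,1)` and `(0,2)`: every off-diagonal position is
𝒢-conjugate to one of these, and the diagonal is fixed by the zero column sums. So `B` has at most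
two orbits, while neither 7 nor 11 is a sum of at most two of the numbers 1, 2, 4, 8.
-/

open MulAction Module

/-- Permutations act on square matrices by relabelling rows and columns simultaneously; by
`Kmat_mul_mul_inv` this is the conjugation `Q ↦ K_σ Q K_σ⁻¹`. -/
instance Matrix.instDistribMulActionPerm {n α : Type*} [AddMonoid α] :
    DistribMulAction (Equiv.Perm n) (Matrix n n α) where
  smul σ Q := Q.submatrix σ.symm σ.symm
  one_smul _ := rfl
  mul_smul _ _ _ := rfl
  smul_zero _ := rfl
  smul_add _ _ _ := rfl

theorem Matrix.perm_smul_apply {n α : Type*} [AddMonoid α] (σ : Equiv.Perm n)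
    (Q : Matrix n n α) (i j : n) : (σ • Q) i j = Q (σ.symm i) (σ.symm j) := rfl

theorem Matrix.apply_apply_of_perm_smul_eq {n α : Type*} [AddMonoid α] {σ : Equiv.Perm n}
    {Q : Matrix n n α} (h : σ • Q = Q) (a b : n) : Q (σ a) (σ b) = Q a b := by
  calc Q (σ a) (σ b) = (σ • Q) (σ a) (σ b) := by rw [h]
    _ = Q a b := by rw [perm_smul_apply, Equiv.symm_apply_apply, Equiv.symm_apply_apply]

theorem Kmat_eq_toMatrix (σ : Equiv.Perm (Fin 4)) : Kmat σ = σ.symm.toPEquiv.toMatrix := by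
  ext i j
  simp only [Kmat, of_apply, PEquiv.toMatrix_apply, Equiv.toPEquiv_apply, Option.mem_def,
    Option.some.injEq, Equiv.eq_symm_apply, eq_comm]

theorem inv_Kmat (σ : Equiv.Perm (Fin 4)) : (Kmat σ)⁻¹ = σ.toPEquiv.toMatrix := by
  refine Matrix.inv_eq_right_inv ?_
  rw [Kmat_eq_toMatrix, ← PEquiv.toMatrix_trans, ← Equiv.toPEquiv_trans, Equiv.symm_trans_self,
    Equiv.toPEquiv_refl, PEquiv.toMatrix_refl]

theorem Kmat_mul_mul_inv (σ : Equiv.Perm (Fin 4)) (Q : Matrix (Fin 4) (Fin 4) ℂ) :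
    Kmat σ * Q * (Kmat σ)⁻¹ = σ • Q := by
  rw [inv_Kmat, Kmat_eq_toMatrix, PEquiv.toMatrix_toPEquiv_mul, PEquiv.mul_toMatrix_toPEquiv]
  rfl

theorem LinearIndependent.sum_fiberwise {R M ι κ : Type*} [Ring R] [AddCommGroup M] [Module R M]
    [Fintype ι] [Fintype κ] [DecidableEq κ] {v : ι → M} (hv : LinearIndependent R v) {g : ι → κ}
    (hg : Function.Surjective g) : LinearIndependent R fun k => ∑ i : {i // g i = k}, v i := by
  rw [Fintype.linearIndependent_iff] at hv ⊢
  intro c hc k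
  obtain ⟨i, rfl⟩ := hg k
  refine hv (c ∘ g) ?_ i
  rw [← Fintype.sum_fiberwise g]
  refine (Finset.sum_congr rfl fun k _ => ?_).trans hc
  rw [Finset.smul_sum]
  exact Finset.sum_congr rfl fun i _ => by rw [Function.comp_apply, i.2]

section OrbitSums

variable {G X : Type*} [Group G] [MulAction G X]

theorem natCard_fiber_orbitRel_dvd (ω : orbitRel.Quotient G X) :
    Nat.card {x // (⟦x⟧ : orbitRel.Quotient G X) = ω} ∣ Nat.card G := by
  obtain ⟨x, rfl⟩ := Quotient.mk_surjective ω
  have e : {y // (⟦y⟧ : orbitRel.Quotient G X) = ⟦x⟧} ≃ orbit G x :=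
    Equiv.subtypeEquivRight fun y => by rw [Quotient.eq, orbitRel_apply]
  rw [Nat.card_congr e, Nat.card_coe_set_eq, ← index_stabilizer]
  exact Subgroup.index_dvd_card _

theorem natCard_eq_sum_natCard_fiber_orbitRel [Finite X] [Fintype (orbitRel.Quotient G X)] :
    Nat.card X = ∑ ω, Nat.card {x // (⟦x⟧ : orbitRel.Quotient G X) = ω} := by
  rw [← Nat.card_congr (Equiv.sigmaFiberEquiv fun x => (⟦x⟧ : orbitRel.Quotient G X)),
    Nat.card_sigma]

variable [DecidableEq (orbitRel.Quotient G X)] [Fintype X]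

def orbitSum {M : Type*} [AddCommMonoid M] (f : X → M) (ω : orbitRel.Quotient G X) : M :=
  ∑ x : {x // (⟦x⟧ : orbitRel.Quotient G X) = ω}, f x

theorem smul_orbitSum {M : Type*} [AddCommMonoid M] [DistribMulAction G M] {f : X → M}
    (hf : ∀ (g : G) x, f (g • x) = g • f x) (g : G) (ω : orbitRel.Quotient G X) :
    g • orbitSum f ω = orbitSum f ω := by
  rw [orbitSum, Finset.smul_sum]
  simp_rw [← hf]
  exact Fintype.sum_equiv ((MulAction.toPerm g).subtypeEquiv fun x => by simp) _ _ fun _ => rfl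

theorem natCard_orbitRel_quotient_le_finrank {K M : Type*} [Field K] [AddCommGroup M]
    [Module K M] [DistribMulAction G M] {f : X → M} (hf : LinearIndependent K f)
    (hequiv : ∀ (g : G) x, f (g • x) = g • f x) (W : Submodule K M) [FiniteDimensional K W]
    (hW : ∀ v ∈ Submodule.span K (Set.range f), (∀ g : G, g • v = v) → v ∈ W) :
    Nat.card (orbitRel.Quotient G X) ≤ finrank K W := by
  have : Fintype (orbitRel.Quotient G X) := Fintype.ofFinite _
  have hind : LinearIndependent K (orbitSum (G := G) f) :=
    hf.sum_fiberwise Quotient.mk_surjective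
  have hmem : ∀ ω, orbitSum (G := G) f ω ∈ W := fun ω =>
    hW _ (Submodule.sum_mem _ fun x _ => Submodule.subset_span ⟨x, rfl⟩)
      fun g => smul_orbitSum hequiv g ω
  have hind' : LinearIndependent K fun ω => (⟨_, hmem ω⟩ : W) := .of_comp W.subtype hind
  rw [Nat.card_eq_fintype_card]
  exact hind'.fintype_card_le_finrank

end OrbitSums

theorem sum_ne_seven_and_ne_eleven {Ω : Type*} [Fintype Ω] (hΩ : Fintype.card Ω ≤ 2)
    (n : Ω → ℕ) (hn : ∀ ω, n ω ∣ 8) : ¬ (∑ ω, n ω = 7 ∨ ∑ ω, n ω = 11) := by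
  classical
  have hdiv : ∀ ω, n ω = 1 ∨ n ω = 2 ∨ n ω = 4 ∨ n ω = 8 := fun ω => by
    simpa [show Nat.divisors 8 = {1, 2, 4, 8} by decide] using
      Nat.mem_divisors.2 ⟨hn ω, by norm_num⟩
  rw [← Finset.card_univ] at hΩ
  obtain h | h | h : (Finset.univ : Finset Ω).card = 0 ∨ (Finset.univ : Finset Ω).card = 1 ∨
      (Finset.univ : Finset Ω).card = 2 := by omega
  · rw [Finset.card_eq_zero.1 h, Finset.sum_empty]
    omega
  · obtain ⟨a, ha⟩ := Finset.card_eq_one.1 h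
    rw [ha, Finset.sum_singleton]
    have := hdiv a
    omega
  · obtain ⟨a, b, hab, hu⟩ := Finset.card_eq_two.1 h
    rw [hu, Finset.sum_pair hab]
    have := hdiv a
    have := hdiv b
    omega

def purinePyrimidineGroup : Subgroup (Equiv.Perm (Fin 4)) where
  carrier := {σ | σ ∈ Glist}
  mul_mem' := by intro a b ha hb; revert a b ha hb; decide
  one_mem' := by decide
  inv_mem' := by intro a ha; revert a ha; decide

instance : DecidablePred (· ∈ purinePyrimidineGroup) := fun σ =>
  List.instDecidableMemOfLawfulBEq σ Glist

theorem natCard_purinePyrimidineGroup : Nat.card purinePyrimidineGroup = 8 := by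
  rw [Nat.card_eq_fintype_card]
  rfl

theorem exists_mem_Glist_offDiag (i j : Fin 4) (hij : i ≠ j) :
    ∃ σ ∈ Glist, σ 0 = i ∧ (σ 1 = j ∨ σ 2 = j) := by
  revert i j
  decide

def rateMatrices : Submodule ℂ (Matrix (Fin 4) (Fin 4) ℂ) where
  carrier := LGMset
  add_mem' {Q R} hQ hR j := by simp [Finset.sum_add_distrib, hQ j, hR j]
  zero_mem' j := by simp
  smul_mem' c Q hQ j := by simp [← Finset.mul_sum, hQ j]

def invariantRateMatrices : Submodule ℂ (Matrix (Fin 4) (Fin 4) ℂ) where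
  carrier := {Q | Q ∈ rateMatrices ∧ ∀ σ ∈ purinePyrimidineGroup, σ • Q = Q}
  add_mem' := by
    rintro Q R ⟨hQ, hQσ⟩ ⟨hR, hRσ⟩
    exact ⟨add_mem hQ hR, fun σ hσ => by rw [smul_add, hQσ σ hσ, hRσ σ hσ]⟩
  zero_mem' := ⟨zero_mem _, fun σ _ => smul_zero σ⟩
  smul_mem' := by
    rintro c Q ⟨hQ, hQσ⟩
    refine ⟨Submodule.smul_mem _ c hQ, fun σ hσ => ?_⟩
    change (c • Q).submatrix _ _ = c • Q
    rw [submatrix_smul]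
    exact congrArg (c • ·) (hQσ σ hσ)

theorem eq_zero_of_mem_invariantRateMatrices {Q : Matrix (Fin 4) (Fin 4) ℂ}
    (hQ : Q ∈ invariantRateMatrices) (h01 : Q 0 1 = 0) (h02 : Q 0 2 = 0) : Q = 0 := by
  obtain ⟨hcol, hfix⟩ := hQ
  have hoff : ∀ i j, i ≠ j → Q i j = 0 := by
    intro i j hij
    obtain ⟨σ, hσ, rfl, rfl | rfl⟩ := exists_mem_Glist_offDiag i j hij
    · rw [apply_apply_of_perm_smul_eq (hfix σ hσ), h01]
    · rw [apply_apply_of_perm_smul_eq (hfix σ hσ), h02]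
  ext i j
  by_cases hij : i = j
  · subst hij
    rw [Matrix.zero_apply, ← hcol i, Finset.sum_eq_single i (fun k _ hk => hoff k i hk) (by simp)]
  · exact hoff i j hij

theorem finrank_invariantRateMatrices_le : finrank ℂ invariantRateMatrices ≤ 2 := by
  let e : invariantRateMatrices →ₗ[ℂ] Fin 2 → ℂ :=
    LinearMap.pi ![entryLinearMap ℂ ℂ 0 1, entryLinearMap ℂ ℂ 0 2] ∘ₗ
      invariantRateMatrices.subtype
  have he : Function.Injective e := by
    rw [← LinearMap.ker_eq_bot, LinearMap.ker_eq_bot']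
    rintro ⟨Q, hQ⟩ h
    exact Subtype.ext (eq_zero_of_mem_invariantRateMatrices hQ (congrFun h 0) (congrFun h 1))
  simpa using e.finrank_le_finrank_of_injective he

theorem no_seven_or_eleven_dimensional_G_invariant_model :
    ¬ ∃ B : Set (Matrix (Fin 4) (Fin 4) ℂ),
      B ⊆ LGMset ∧
      (B.ncard = 7 ∨ B.ncard = 11) ∧
      LinearIndependent ℂ ((↑) : B → Matrix (Fin 4) (Fin 4) ℂ) ∧
      (∀ σ ∈ Glist, (fun Q => Kmat σ * Q * (Kmat σ)⁻¹) '' B = B) := by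
  classical
  rintro ⟨B, hBL, hcard, hli, hinv⟩
  let p : SubMulAction purinePyrimidineGroup (Matrix (Fin 4) (Fin 4) ℂ) :=
    ⟨B, fun σ Q hQ => hinv σ σ.2 ▸ ⟨Q, hQ, Kmat_mul_mul_inv σ Q⟩⟩
  have : Fintype p := (Set.finite_of_ncard_ne_zero (s := B) (by omega)).fintype
  have hli' : LinearIndependent ℂ ((↑) : p → Matrix (Fin 4) (Fin 4) ℂ) := hli
  have hspan : Submodule.span ℂ (Set.range ((↑) : p → Matrix (Fin 4) (Fin 4) ℂ)) ≤
      rateMatrices := Submodule.span_le.2 (Set.range_subset_iff.2 fun x => hBL x.2)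
  have horbits : Fintype.card (orbitRel.Quotient purinePyrimidineGroup p) ≤ 2 := by
    rw [← Nat.card_eq_fintype_card]
    exact (natCard_orbitRel_quotient_le_finrank hli' (fun _ _ => rfl)
      invariantRateMatrices fun v hv hfix => ⟨hspan hv, fun σ hσ => hfix ⟨σ, hσ⟩⟩).trans
      finrank_invariantRateMatrices_le
  rw [← Nat.card_coe_set_eq, show Nat.card B = Nat.card p from rfl,
    natCard_eq_sum_natCard_fiber_orbitRel (G := purinePyrimidineGroup)] at hcard
  exact sum_ne_seven_and_ne_eleven horbits _
    (fun ω => natCard_purinePyrimidineGroup ▸ natCard_fiber_orbitRel_dvd ω) hcard
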